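/- In the small CM setup with the Lemma 2.4 conditions, for every positive integer d the following equalities of subsets of the 2×2 complex matrices hold: i_d^+(ã₀) = M₂(ℤ) ∩ i_d^+(ℚ(√D₀)), i_d^+(ã) = L_d ∩ i_d^+(ℚ(√D₀)), i_d^−(𝔞₀) = M₂(ℤ) ∩ i_d^−(ℚ(√D₀)), and i_d^−(𝔞) = L_d ∩ i_d^−(ℚ(√D₀)). Moreover, the dual lattices of ã and 𝔞 with respect to the bilinear form (x,y) ↦ (dt/a)·Tr_{ℚ(√D₀)/ℚ}(x·ȳ) are {μ ∈ ℚ(√D₀) : (dt/a)·Tr(μ·ν̄) ∈ ℤ for all ν ∈ ã} = (1/(2dt√D₀))·ã and, respectively, {μ ∈ ℚ(√D₀) : (dt/a)·Tr(μ·ν̄) ∈ ℤ for all ν ∈ 𝔞} = (1/(2dt√D₀))·𝔞. (Equation (2.35) and the dual-lattice assertion of Proposition 2.9 of the paper.) -/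

import Mathlib

open Matrix Complex ComplexConjugate

/-- `√D₀ := i·√|D₀|`. -/
noncomputable def sd (D₀ : ℤ) : ℂ := Complex.I * Real.sqrt (D₀.natAbs)

/-- The matrix `w_d(z₁,z₂) = (1/d)·[[z₁, −z₁z₂],[1, −z₂]]`. -/
noncomputable def wMat (d : ℕ) (z₁ z₂ : ℂ) : Matrix (Fin 2) (Fin 2) ℂ :=
  ((d : ℂ))⁻¹ • !![z₁, -z₁ * z₂; 1, -z₂]

/-- Entrywise complex conjugation of a matrix. -/
noncomputable def matConj (m : Matrix (Fin 2) (Fin 2) ℂ) : Matrix (Fin 2) (Fin 2) ℂ :=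
  m.map (starRingEnd ℂ)

/-- `i_d^+(λ) := −(d/√D₀)·(λ·w̃ − conj(λ·w̃))`. -/
noncomputable def iPlus (D₀ : ℤ) (d : ℕ) (z₁ z₂ : ℂ) (lam : ℂ) : Matrix (Fin 2) (Fin 2) ℂ :=
  (-(d : ℂ) / sd D₀) •
    (lam • wMat d z₁ (starRingEnd ℂ z₂) - matConj (lam • wMat d z₁ (starRingEnd ℂ z₂)))

/-- `i_d^−(λ) := −(d/√D₀)·(λ·w − conj(λ·w))`. -/
noncomputable def iMinus (D₀ : ℤ) (d : ℕ) (z₁ z₂ : ℂ) (lam : ℂ) : Matrix (Fin 2) (Fin 2) ℂ :=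
  (-(d : ℂ) / sd D₀) • (lam • wMat d z₁ z₂ - matConj (lam • wMat d z₁ z₂))

/-- The set of 2×2 matrices with integer entries (inside the complex matrices). -/
def intMatSet : Set (Matrix (Fin 2) (Fin 2) ℂ) :=
  {m | ∀ i j, ∃ k : ℤ, m i j = (k : ℂ)}

/-- The lattice `L_d`: integer matrices whose lower-left entry is even. -/
def LdSet : Set (Matrix (Fin 2) (Fin 2) ℂ) :=
  {m | (∀ i j, ∃ k : ℤ, m i j = (k : ℂ)) ∧ ∃ k : ℤ, m 1 0 = 2 * (k : ℂ)}

/-- `ℚ(√D₀) = ℚ + ℚ√D₀ ⊂ ℂ` as a set. -/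
def Kset (D₀ : ℤ) : Set ℂ := {z | ∃ x y : ℚ, z = (x : ℂ) + (y : ℂ) * sd D₀}

/-- The `ℤ`-lattice `ℤu + ℤv ⊂ ℂ`. -/
def latSet (u v : ℂ) : Set ℂ := {z | ∃ x y : ℤ, z = (x : ℂ) * u + (y : ℂ) * v}

lemma sd_sq (D₀ : ℤ) (h : D₀ < 0) : sd D₀ * sd D₀ = (D₀ : ℂ) := by
  unfold sd
  have h1 : (Real.sqrt (D₀.natAbs) : ℂ) * (Real.sqrt (D₀.natAbs)) = ((D₀.natAbs : ℝ) : ℂ) := by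
    norm_cast
    exact_mod_cast Real.mul_self_sqrt (by positivity)
  have h2 : ((D₀.natAbs : ℝ) : ℂ) = -(D₀ : ℂ) := by
    push_cast [Nat.cast_natAbs]
    rw [abs_of_nonpos (show (D₀:ℝ) ≤ 0 by exact_mod_cast h.le)]
    push_cast; ring
  calc Complex.I * ↑(Real.sqrt ↑D₀.natAbs) * (Complex.I * ↑(Real.sqrt ↑D₀.natAbs))
      = (Complex.I*Complex.I) * ((Real.sqrt ↑D₀.natAbs : ℂ) * (Real.sqrt ↑D₀.natAbs)) := by ring
    _ = (-1) * (-(D₀:ℂ)) := by rw [Complex.I_mul_I, h1, h2]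
    _ = (D₀ : ℂ) := by ring

lemma sd_ne (D₀ : ℤ) (h : D₀ < 0) : sd D₀ ≠ 0 := by
  intro h0
  have h1 := sd_sq D₀ h
  rw [h0] at h1
  have : (D₀ : ℂ) = 0 := by rw [← h1]; ring
  have : D₀ = 0 := by exact_mod_cast this
  omega

lemma sd_conj (D₀ : ℤ) : (starRingEnd ℂ) (sd D₀) = -sd D₀ := by
  unfold sd
  rw [_root_.map_mul, Complex.conj_I, Complex.conj_ofReal]
  ring

set_option maxHeartbeats 800000

lemma iMinus_eval (D₀ : ℤ) (d t₁ t₂ a₁ a₂ : ℕ) (b : ℤ) (x y : ℚ)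
    (hneg : D₀ < 0) (hd : (d:ℂ) ≠ 0) (ha₁ : (a₁:ℂ) ≠ 0) (ha₂ : (a₂:ℂ) ≠ 0) :
    iMinus D₀ d ((t₁ : ℂ) * ((b : ℂ) + sd D₀) / (2 * (a₁ : ℂ)))
      ((t₂ : ℂ) * ((b : ℂ) + sd D₀) / (2 * (a₂ : ℂ))) ((x:ℂ) + (y:ℂ) * sd D₀) =
    !![ ((-(t₁*(x+y*b))/a₁ : ℚ):ℂ), (((t₁*t₂)*(2*b*x + y*(b^2+D₀))/(2*(a₁*a₂)) : ℚ):ℂ);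
        ((-2*y : ℚ):ℂ), ((t₂*(x+y*b)/a₂ : ℚ):ℂ)] := by
  have he := sd_sq D₀ hneg
  have hne := sd_ne D₀ hneg
  ext i j
  fin_cases i <;> fin_cases j
  · show iMinus D₀ d _ _ _ 0 0 = ((-(t₁*(x+y*b))/a₁ : ℚ):ℂ)
    simp only [iMinus, wMat, matConj, Matrix.map_apply, Matrix.smul_apply, Matrix.sub_apply,
      Matrix.cons_val', Matrix.cons_val_zero, Matrix.cons_val_one, Matrix.head_cons,
      Matrix.head_fin_const, Matrix.empty_val', Matrix.cons_val_fin_one, Matrix.of_apply,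
      smul_eq_mul, _root_.map_mul, _root_.map_add, _root_.map_sub, _root_.map_neg,
      _root_.map_one, map_inv₀, map_div₀,
      map_ratCast, map_intCast, map_natCast, _root_.map_ofNat, sd_conj]
    push_cast
    rw [div_mul_eq_mul_div, div_eq_iff hne]
    field_simp
    try ring
  · show iMinus D₀ d _ _ _ 0 1 = (((t₁*t₂)*(2*b*x + y*(b^2+D₀))/(2*(a₁*a₂)) : ℚ):ℂ)
    simp only [iMinus, wMat, matConj, Matrix.map_apply, Matrix.smul_apply, Matrix.sub_apply,
      Matrix.cons_val', Matrix.cons_val_zero, Matrix.cons_val_one, Matrix.head_cons,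
      Matrix.head_fin_const, Matrix.empty_val', Matrix.cons_val_fin_one, Matrix.of_apply,
      smul_eq_mul, _root_.map_mul, _root_.map_add, _root_.map_sub, _root_.map_neg,
      _root_.map_one, map_inv₀, map_div₀,
      map_ratCast, map_intCast, map_natCast, _root_.map_ofNat, sd_conj]
    push_cast
    rw [div_mul_eq_mul_div, div_eq_iff hne]
    field_simp
    have hF : (d:ℂ)^2*((d:ℂ)⁻¹)^2*((a₁:ℂ))^2*((a₁:ℂ)⁻¹)^2*((a₂:ℂ))^2*((a₂:ℂ)⁻¹)^2 = 1 := by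
      field_simp
    linear_combination (2*(y:ℂ)*sd D₀*(t₁:ℂ)*(t₂:ℂ)) * he
  · show iMinus D₀ d _ _ _ 1 0 = ((-2*y : ℚ):ℂ)
    simp only [iMinus, wMat, matConj, Matrix.map_apply, Matrix.smul_apply, Matrix.sub_apply,
      Matrix.cons_val', Matrix.cons_val_zero, Matrix.cons_val_one, Matrix.head_cons,
      Matrix.head_fin_const, Matrix.empty_val', Matrix.cons_val_fin_one, Matrix.of_apply,
      smul_eq_mul, _root_.map_mul, _root_.map_add, _root_.map_sub, _root_.map_neg,
      _root_.map_one, map_inv₀, map_div₀,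
      map_ratCast, map_intCast, map_natCast, _root_.map_ofNat, sd_conj]
    push_cast
    rw [div_mul_eq_mul_div, div_eq_iff hne]
    field_simp
    try ring
  · show iMinus D₀ d _ _ _ 1 1 = ((t₂*(x+y*b)/a₂ : ℚ):ℂ)
    simp only [iMinus, wMat, matConj, Matrix.map_apply, Matrix.smul_apply, Matrix.sub_apply,
      Matrix.cons_val', Matrix.cons_val_zero, Matrix.cons_val_one, Matrix.head_cons,
      Matrix.head_fin_const, Matrix.empty_val', Matrix.cons_val_fin_one, Matrix.of_apply,
      smul_eq_mul, _root_.map_mul, _root_.map_add, _root_.map_sub, _root_.map_neg,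
      _root_.map_one, map_inv₀, map_div₀,
      map_ratCast, map_intCast, map_natCast, _root_.map_ofNat, sd_conj]
    push_cast
    rw [div_mul_eq_mul_div, div_eq_iff hne]
    field_simp
    try ring
lemma iPlus_eval (D₀ : ℤ) (d t₁ t₂ a₁ a₂ : ℕ) (b : ℤ) (x y : ℚ)
    (hneg : D₀ < 0) (hd : (d:ℂ) ≠ 0) (ha₁ : (a₁:ℂ) ≠ 0) (ha₂ : (a₂:ℂ) ≠ 0) :
    iPlus D₀ d ((t₁ : ℂ) * ((b : ℂ) + sd D₀) / (2 * (a₁ : ℂ)))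
      ((t₂ : ℂ) * ((b : ℂ) + sd D₀) / (2 * (a₂ : ℂ))) ((x:ℂ) + (y:ℂ) * sd D₀) =
    !![ ((-(t₁*(x+y*b))/a₁ : ℚ):ℂ), (((t₁*t₂)*(y*(b^2-D₀))/(2*(a₁*a₂)) : ℚ):ℂ);
        ((-2*y : ℚ):ℂ), ((t₂*(y*b-x)/a₂ : ℚ):ℂ)] := by
  have he := sd_sq D₀ hneg
  have hne := sd_ne D₀ hneg
  ext i j
  fin_cases i <;> fin_cases j
  · show iPlus D₀ d _ _ _ 0 0 = ((-(t₁*(x+y*b))/a₁ : ℚ):ℂ)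
    simp only [iPlus, wMat, matConj, Matrix.map_apply, Matrix.smul_apply, Matrix.sub_apply,
      Matrix.cons_val', Matrix.cons_val_zero, Matrix.cons_val_one, Matrix.head_cons,
      Matrix.head_fin_const, Matrix.empty_val', Matrix.cons_val_fin_one, Matrix.of_apply,
      smul_eq_mul, _root_.map_mul, _root_.map_add, _root_.map_sub, _root_.map_neg,
      _root_.map_one, map_inv₀, map_div₀,
      map_ratCast, map_intCast, map_natCast, _root_.map_ofNat, sd_conj]
    push_cast
    rw [div_mul_eq_mul_div, div_eq_iff hne]
    field_simp
    try ring
  · show iPlus D₀ d _ _ _ 0 1 = (((t₁*t₂)*(y*(b^2-D₀))/(2*(a₁*a₂)) : ℚ):ℂ)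
    simp only [iPlus, wMat, matConj, Matrix.map_apply, Matrix.smul_apply, Matrix.sub_apply,
      Matrix.cons_val', Matrix.cons_val_zero, Matrix.cons_val_one, Matrix.head_cons,
      Matrix.head_fin_const, Matrix.empty_val', Matrix.cons_val_fin_one, Matrix.of_apply,
      smul_eq_mul, _root_.map_mul, _root_.map_add, _root_.map_sub, _root_.map_neg,
      _root_.map_one, map_inv₀, map_div₀,
      map_ratCast, map_intCast, map_natCast, _root_.map_ofNat, sd_conj]
    push_cast
    rw [div_mul_eq_mul_div, div_eq_iff hne]
    field_simp
    try ring
    try (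
      have hF : (d:ℂ)^2*((d:ℂ)⁻¹)^2*((a₁:ℂ))^2*((a₁:ℂ)⁻¹)^2*((a₂:ℂ))^2*((a₂:ℂ)⁻¹)^2 = 1 := by
        field_simp
      linear_combination (-2*(y:ℂ)*sd D₀*(t₁:ℂ)*(t₂:ℂ)) * he)
  · show iPlus D₀ d _ _ _ 1 0 = ((-2*y : ℚ):ℂ)
    simp only [iPlus, wMat, matConj, Matrix.map_apply, Matrix.smul_apply, Matrix.sub_apply,
      Matrix.cons_val', Matrix.cons_val_zero, Matrix.cons_val_one, Matrix.head_cons,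
      Matrix.head_fin_const, Matrix.empty_val', Matrix.cons_val_fin_one, Matrix.of_apply,
      smul_eq_mul, _root_.map_mul, _root_.map_add, _root_.map_sub, _root_.map_neg,
      _root_.map_one, map_inv₀, map_div₀,
      map_ratCast, map_intCast, map_natCast, _root_.map_ofNat, sd_conj]
    push_cast
    rw [div_mul_eq_mul_div, div_eq_iff hne]
    field_simp
    try ring
  · show iPlus D₀ d _ _ _ 1 1 = ((t₂*(y*b-x)/a₂ : ℚ):ℂ)
    simp only [iPlus, wMat, matConj, Matrix.map_apply, Matrix.smul_apply, Matrix.sub_apply,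
      Matrix.cons_val', Matrix.cons_val_zero, Matrix.cons_val_one, Matrix.head_cons,
      Matrix.head_fin_const, Matrix.empty_val', Matrix.cons_val_fin_one, Matrix.of_apply,
      smul_eq_mul, _root_.map_mul, _root_.map_add, _root_.map_sub, _root_.map_neg,
      _root_.map_one, map_inv₀, map_div₀,
      map_ratCast, map_intCast, map_natCast, _root_.map_ofNat, sd_conj]
    push_cast
    rw [div_mul_eq_mul_div, div_eq_iff hne]
    field_simp
    try ring


lemma key_w (t₁ t₂ a₁ a₂ : ℕ) (ht₁ : (t₁:ℚ) ≠ 0) (ht₂ : (t₂:ℚ) ≠ 0)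
    (hc1 : IsCoprime (t₁:ℤ) ((t₂:ℤ)*(a₁:ℤ))) (hc2 : IsCoprime ((a₂:ℤ)) ((t₂:ℤ)*(a₁:ℤ)))
    (w : ℚ) (k₁ k₂ : ℤ) (h1 : (t₁:ℚ)*w = (a₁:ℚ)*k₁) (h2 : (t₂:ℚ)*w = (a₂:ℚ)*k₂) :
    ∃ j:ℤ, w = ((a₁:ℚ)*(a₂:ℚ))*j := by
  have hcross : ((t₂:ℤ)*(a₁:ℤ))*k₁ = (t₁:ℤ)*((a₂:ℤ)*k₂) := by
    have hq : ((t₂:ℚ)*(a₁:ℚ))*k₁ = (t₁:ℚ)*((a₂:ℚ)*k₂) := by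
      calc ((t₂:ℚ)*(a₁:ℚ))*k₁ = (t₂:ℚ)*((a₁:ℚ)*k₁) := by ring
        _ = (t₂:ℚ)*((t₁:ℚ)*w) := by rw [h1]
        _ = (t₁:ℚ)*((t₂:ℚ)*w) := by ring
        _ = (t₁:ℚ)*((a₂:ℚ)*k₂) := by rw [h2]
    exact_mod_cast hq
  have hd1 : (t₁:ℤ) ∣ k₁ := hc1.dvd_of_dvd_mul_left ⟨(a₂:ℤ)*k₂, by linarith [hcross]⟩
  obtain ⟨j₁, rfl⟩ := hd1
  have hw : w = (a₁:ℚ)*j₁ := by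
    have : (t₁:ℚ)*w = (t₁:ℚ)*((a₁:ℚ)*j₁) := by push_cast at h1 ⊢; linarith [h1]
    exact mul_left_cancel₀ ht₁ this
  have h2' : ((t₂:ℤ)*(a₁:ℤ))*j₁ = (a₂:ℤ)*k₂ := by
    have hq : ((t₂:ℚ)*(a₁:ℚ))*j₁ = (a₂:ℚ)*k₂ := by
      rw [← h2, hw]; ring
    exact_mod_cast hq
  have hd2 : (a₂:ℤ) ∣ j₁ := hc2.dvd_of_dvd_mul_left ⟨k₂, by linarith [h2']⟩
  obtain ⟨j, rfl⟩ := hd2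
  exact ⟨j, by rw [hw]; push_cast; ring⟩

lemma L3 (D₀ : ℤ) (hneg : D₀ < 0) (d t₁ t₂ a₁ a₂ : ℕ)
    (hd : (d:ℂ) ≠ 0) (ht₁ : (t₁:ℚ) ≠ 0) (ht₂ : (t₂:ℚ) ≠ 0)
    (ha₁ : (a₁:ℚ) ≠ 0) (ha₂ : (a₂:ℚ) ≠ 0)
    (b c : ℤ) (hc : b^2 - D₀ = 4*(a₁:ℤ)*(a₂:ℤ)*c)
    (hc1 : IsCoprime (t₁:ℤ) ((t₂:ℤ)*(a₁:ℤ))) (hc2 : IsCoprime ((a₂:ℤ)) ((t₂:ℤ)*(a₁:ℤ))) :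
    iMinus D₀ d ((t₁ : ℂ) * ((b : ℂ) + sd D₀) / (2 * (a₁ : ℂ)))
      ((t₂ : ℂ) * ((b : ℂ) + sd D₀) / (2 * (a₂ : ℂ))) ''
      latSet ((a₁ * a₂ : ℕ) : ℂ) ((-(b : ℂ) + sd D₀) / 2) =
    intMatSet ∩ iMinus D₀ d ((t₁ : ℂ) * ((b : ℂ) + sd D₀) / (2 * (a₁ : ℂ)))
      ((t₂ : ℂ) * ((b : ℂ) + sd D₀) / (2 * (a₂ : ℂ))) '' Kset D₀ := by
  have ha₁c : (a₁:ℂ) ≠ 0 := by exact_mod_cast (by exact_mod_cast ha₁ : ((a₁:ℚ):ℂ) ≠ 0)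
  have ha₂c : (a₂:ℂ) ≠ 0 := by exact_mod_cast (by exact_mod_cast ha₂ : ((a₂:ℚ):ℂ) ≠ 0)
  have hcq : (b:ℚ)^2 - (D₀:ℚ) = 4*(a₁:ℚ)*(a₂:ℚ)*(c:ℚ) := by exact_mod_cast hc
  ext M
  constructor
  · rintro ⟨lam, ⟨m, n, rfl⟩, rfl⟩
    set x : ℚ := m*(a₁*a₂) - n*b/2 with hxdef
    set y : ℚ := n/2 with hydef
    have hlam : (m:ℂ)*((a₁*a₂ : ℕ):ℂ) + (n:ℂ)*((-(b:ℂ) + sd D₀)/2)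
        = ((x:ℚ):ℂ) + ((y:ℚ):ℂ)*sd D₀ := by rw [hxdef, hydef]; push_cast; ring
    rw [hlam, iMinus_eval D₀ d t₁ t₂ a₁ a₂ b x y hneg hd ha₁c ha₂c]
    refine ⟨?_, ⟨((x:ℚ):ℂ) + ((y:ℚ):ℂ)*sd D₀, ⟨x, y, rfl⟩,
      (iMinus_eval D₀ d t₁ t₂ a₁ a₂ b x y hneg hd ha₁c ha₂c).symm ▸ rfl⟩⟩
    intro i j
    fin_cases i <;> fin_cases j
    · exact ⟨-(t₁*m*a₂), by show ((_ : ℚ):ℂ) = _; norm_cast; rw [hxdef, hydef]; field_simp; push_cast; ring⟩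
    · refine ⟨t₁*t₂*(b*m - c*n), ?_⟩
      show ((_ : ℚ):ℂ) = _
      norm_cast
      rw [hxdef, hydef]; field_simp
      push_cast
      linear_combination (-(t₁:ℚ)*t₂*n) * hcq
    · exact ⟨-n, by show ((_ : ℚ):ℂ) = _; push_cast [hydef]; ring⟩
    · exact ⟨t₂*m*a₁, by show ((_ : ℚ):ℂ) = _; norm_cast; rw [hxdef, hydef]; field_simp; push_cast; ring⟩
  · rintro ⟨hint, lam, ⟨x, y, rfl⟩, rfl⟩
    rw [iMinus_eval D₀ d t₁ t₂ a₁ a₂ b x y hneg hd ha₁c ha₂c] at hint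
    obtain ⟨k₁, hk₁⟩ := hint 0 0
    obtain ⟨k₃, hk₃⟩ := hint 1 0
    obtain ⟨k₄, hk₄⟩ := hint 1 1
    simp only [Matrix.cons_val', Matrix.cons_val_zero, Matrix.cons_val_one, Matrix.head_cons,
      Matrix.head_fin_const, Matrix.empty_val', Matrix.cons_val_fin_one, Matrix.of_apply]
      at hk₁ hk₃ hk₄
    have hq1 : -(t₁*(x+y*(b:ℚ)))/a₁ = (k₁:ℚ) := by exact_mod_cast hk₁
    have hq3 : -2*y = (k₃:ℚ) := by exact_mod_cast hk₃
    have hq4 : t₂*(x+y*(b:ℚ))/a₂ = (k₄:ℚ) := by exact_mod_cast hk₄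
    have h1 : (t₁:ℚ)*(x+y*(b:ℚ)) = (a₁:ℚ)*(-k₁) := by
      field_simp at hq1; linear_combination -hq1
    have h2 : (t₂:ℚ)*(x+y*(b:ℚ)) = (a₂:ℚ)*k₄ := by
      field_simp at hq4; linear_combination hq4
    obtain ⟨j, hj⟩ := key_w t₁ t₂ a₁ a₂ ht₁ ht₂ hc1 hc2 _ _ _ h1 h2
    refine ⟨(j:ℂ)*((a₁*a₂ : ℕ):ℂ) + ((-k₃ : ℤ):ℂ)*((-(b:ℂ) + sd D₀)/2), ⟨j, -k₃, rfl⟩, ?_⟩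
    have hjC : (x:ℂ) + (y:ℂ)*(b:ℂ) = (a₁:ℂ)*(a₂:ℂ)*(j:ℂ) := by exact_mod_cast hj
    have hk₃C : (-2:ℂ)*(y:ℂ) = (k₃:ℂ) := by exact_mod_cast hq3
    have harg : (j:ℂ)*((a₁*a₂ : ℕ):ℂ) + ((-k₃ : ℤ):ℂ)*((-(b:ℂ) + sd D₀)/2)
        = ((x:ℚ):ℂ) + ((y:ℚ):ℂ)*sd D₀ := by
      push_cast
      linear_combination -hjC + ((-(b:ℂ) + sd D₀)/2) * hk₃C
    rw [harg]

lemma L4 (D₀ : ℤ) (hneg : D₀ < 0) (d t₁ t₂ a₁ a₂ : ℕ)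
    (hd : (d:ℂ) ≠ 0) (ht₁ : (t₁:ℚ) ≠ 0) (ht₂ : (t₂:ℚ) ≠ 0)
    (ha₁ : (a₁:ℚ) ≠ 0) (ha₂ : (a₂:ℚ) ≠ 0)
    (b c : ℤ) (hc : b^2 - D₀ = 4*(a₁:ℤ)*(a₂:ℤ)*c)
    (hc1 : IsCoprime (t₁:ℤ) ((t₂:ℤ)*(a₁:ℤ))) (hc2 : IsCoprime ((a₂:ℤ)) ((t₂:ℤ)*(a₁:ℤ))) :
    iMinus D₀ d ((t₁ : ℂ) * ((b : ℂ) + sd D₀) / (2 * (a₁ : ℂ)))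
      ((t₂ : ℂ) * ((b : ℂ) + sd D₀) / (2 * (a₂ : ℂ))) ''
      latSet ((a₁ * a₂ : ℕ) : ℂ) (-(b : ℂ) + sd D₀) =
    LdSet ∩ iMinus D₀ d ((t₁ : ℂ) * ((b : ℂ) + sd D₀) / (2 * (a₁ : ℂ)))
      ((t₂ : ℂ) * ((b : ℂ) + sd D₀) / (2 * (a₂ : ℂ))) '' Kset D₀ := by
  have ha₁c : (a₁:ℂ) ≠ 0 := by exact_mod_cast (by exact_mod_cast ha₁ : ((a₁:ℚ):ℂ) ≠ 0)
  have ha₂c : (a₂:ℂ) ≠ 0 := by exact_mod_cast (by exact_mod_cast ha₂ : ((a₂:ℚ):ℂ) ≠ 0)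
  have hcq : (b:ℚ)^2 - (D₀:ℚ) = 4*(a₁:ℚ)*(a₂:ℚ)*(c:ℚ) := by exact_mod_cast hc
  ext M
  constructor
  · rintro ⟨lam, ⟨m, n, rfl⟩, rfl⟩
    set x : ℚ := m*(a₁*a₂) - n*b with hxdef
    set y : ℚ := (n:ℚ) with hydef
    have hlam : (m:ℂ)*((a₁*a₂ : ℕ):ℂ) + (n:ℂ)*(-(b:ℂ) + sd D₀)
        = ((x:ℚ):ℂ) + ((y:ℚ):ℂ)*sd D₀ := by rw [hxdef, hydef]; push_cast; ring
    rw [hlam, iMinus_eval D₀ d t₁ t₂ a₁ a₂ b x y hneg hd ha₁c ha₂c]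
    refine ⟨⟨?_, ⟨-n, by show ((_ : ℚ):ℂ) = _; push_cast [hydef]; ring⟩⟩,
      ⟨((x:ℚ):ℂ) + ((y:ℚ):ℂ)*sd D₀, ⟨x, y, rfl⟩,
      (iMinus_eval D₀ d t₁ t₂ a₁ a₂ b x y hneg hd ha₁c ha₂c).symm ▸ rfl⟩⟩
    intro i j
    fin_cases i <;> fin_cases j
    · exact ⟨-(t₁*m*a₂), by show ((_ : ℚ):ℂ) = _; norm_cast; rw [hxdef, hydef]; field_simp; push_cast; ring⟩
    · refine ⟨t₁*t₂*(b*m - 2*c*n), ?_⟩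
      show ((_ : ℚ):ℂ) = _
      norm_cast
      rw [hxdef, hydef]; field_simp
      push_cast
      linear_combination (-(t₁:ℚ)*t₂*n) * hcq
    · exact ⟨-2*n, by show ((_ : ℚ):ℂ) = _; push_cast [hydef]; ring⟩
    · exact ⟨t₂*m*a₁, by show ((_ : ℚ):ℂ) = _; norm_cast; rw [hxdef, hydef]; field_simp; push_cast; ring⟩
  · rintro ⟨⟨hint, ke, hke⟩, lam, ⟨x, y, rfl⟩, rfl⟩
    rw [iMinus_eval D₀ d t₁ t₂ a₁ a₂ b x y hneg hd ha₁c ha₂c] at hint hke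
    obtain ⟨k₁, hk₁⟩ := hint 0 0
    obtain ⟨k₄, hk₄⟩ := hint 1 1
    simp only [Matrix.cons_val', Matrix.cons_val_zero, Matrix.cons_val_one, Matrix.head_cons,
      Matrix.head_fin_const, Matrix.empty_val', Matrix.cons_val_fin_one, Matrix.of_apply]
      at hk₁ hk₄ hke
    have hq1 : -(t₁*(x+y*(b:ℚ)))/a₁ = (k₁:ℚ) := by exact_mod_cast hk₁
    have hq3 : -2*y = 2*(ke:ℚ) := by exact_mod_cast hke
    have hq4 : t₂*(x+y*(b:ℚ))/a₂ = (k₄:ℚ) := by exact_mod_cast hk₄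
    have h1 : (t₁:ℚ)*(x+y*(b:ℚ)) = (a₁:ℚ)*(-k₁) := by
      field_simp at hq1; linear_combination -hq1
    have h2 : (t₂:ℚ)*(x+y*(b:ℚ)) = (a₂:ℚ)*k₄ := by
      field_simp at hq4; linear_combination hq4
    obtain ⟨j, hj⟩ := key_w t₁ t₂ a₁ a₂ ht₁ ht₂ hc1 hc2 _ _ _ h1 h2
    refine ⟨(j:ℂ)*((a₁*a₂ : ℕ):ℂ) + ((-ke : ℤ):ℂ)*(-(b:ℂ) + sd D₀), ⟨j, -ke, rfl⟩, ?_⟩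
    have hjC : (x:ℂ) + (y:ℂ)*(b:ℂ) = (a₁:ℂ)*(a₂:ℂ)*(j:ℂ) := by exact_mod_cast hj
    have hk₃C : (-2:ℂ)*(y:ℂ) = 2*(ke:ℂ) := by exact_mod_cast hq3
    have harg : (j:ℂ)*((a₁*a₂ : ℕ):ℂ) + ((-ke : ℤ):ℂ)*(-(b:ℂ) + sd D₀)
        = ((x:ℚ):ℂ) + ((y:ℚ):ℂ)*sd D₀ := by
      push_cast
      linear_combination -hjC + ((-(b:ℂ) + sd D₀)/2) * hk₃C
    rw [harg]

lemma L1 (D₀ : ℤ) (hneg : D₀ < 0) (d t₁ t₂ a₁ a₂ : ℕ)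
    (hd : (d:ℂ) ≠ 0) (ht₁ : (t₁:ℚ) ≠ 0) (ht₂ : (t₂:ℚ) ≠ 0)
    (ha₁ : (a₁:ℚ) ≠ 0) (ha₂ : (a₂:ℚ) ≠ 0)
    (b btil c β₁ β₂ : ℤ) (hc : b^2 - D₀ = 4*(a₁:ℤ)*(a₂:ℤ)*c)
    (hβ₁ : btil - b = 2*(a₁:ℤ)*β₁) (hβ₂ : btil + b = 2*(a₂:ℤ)*β₂)
    (hc1 : IsCoprime (t₁:ℤ) ((t₂:ℤ)*(a₁:ℤ))) (hc2 : IsCoprime ((a₂:ℤ)) ((t₂:ℤ)*(a₁:ℤ))) :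
    iPlus D₀ d ((t₁ : ℂ) * ((b : ℂ) + sd D₀) / (2 * (a₁ : ℂ)))
      ((t₂ : ℂ) * ((b : ℂ) + sd D₀) / (2 * (a₂ : ℂ))) ''
      latSet ((a₁ * a₂ : ℕ) : ℂ) ((-(btil : ℂ) + sd D₀) / 2) =
    intMatSet ∩ iPlus D₀ d ((t₁ : ℂ) * ((b : ℂ) + sd D₀) / (2 * (a₁ : ℂ)))
      ((t₂ : ℂ) * ((b : ℂ) + sd D₀) / (2 * (a₂ : ℂ))) '' Kset D₀ := by
  have ha₁c : (a₁:ℂ) ≠ 0 := by exact_mod_cast (by exact_mod_cast ha₁ : ((a₁:ℚ):ℂ) ≠ 0)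
  have ha₂c : (a₂:ℂ) ≠ 0 := by exact_mod_cast (by exact_mod_cast ha₂ : ((a₂:ℚ):ℂ) ≠ 0)
  have hcq : (b:ℚ)^2 - (D₀:ℚ) = 4*(a₁:ℚ)*(a₂:ℚ)*(c:ℚ) := by exact_mod_cast hc
  have hβ₁q : (btil:ℚ) - (b:ℚ) = 2*(a₁:ℚ)*(β₁:ℚ) := by exact_mod_cast hβ₁
  have hβ₂q : (btil:ℚ) + (b:ℚ) = 2*(a₂:ℚ)*(β₂:ℚ) := by exact_mod_cast hβ₂
  ext M
  constructor
  · rintro ⟨lam, ⟨m, n, rfl⟩, rfl⟩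
    set x : ℚ := m*(a₁*a₂) - n*btil/2 with hxdef
    set y : ℚ := n/2 with hydef
    have hlam : (m:ℂ)*((a₁*a₂ : ℕ):ℂ) + (n:ℂ)*((-(btil:ℂ) + sd D₀)/2)
        = ((x:ℚ):ℂ) + ((y:ℚ):ℂ)*sd D₀ := by rw [hxdef, hydef]; push_cast; ring
    rw [hlam, iPlus_eval D₀ d t₁ t₂ a₁ a₂ b x y hneg hd ha₁c ha₂c]
    refine ⟨?_, ⟨((x:ℚ):ℂ) + ((y:ℚ):ℂ)*sd D₀, ⟨x, y, rfl⟩,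
      (iPlus_eval D₀ d t₁ t₂ a₁ a₂ b x y hneg hd ha₁c ha₂c).symm ▸ rfl⟩⟩
    intro i j
    fin_cases i <;> fin_cases j
    · refine ⟨-(t₁*(m*a₂ - n*β₁)), ?_⟩
      show ((_ : ℚ):ℂ) = _
      norm_cast
      rw [hxdef, hydef]; field_simp
      push_cast
      linear_combination ((t₁:ℚ)*n) * hβ₁q
    · refine ⟨t₁*t₂*(n*c), ?_⟩
      show ((_ : ℚ):ℂ) = _
      norm_cast
      rw [hydef]; field_simp
      push_cast
      linear_combination ((t₁:ℚ)*t₂*n) * hcq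
    · exact ⟨-n, by show ((_ : ℚ):ℂ) = _; push_cast [hydef]; ring⟩
    · refine ⟨t₂*(n*β₂ - m*a₁), ?_⟩
      show ((_ : ℚ):ℂ) = _
      norm_cast
      rw [hxdef, hydef]; field_simp
      push_cast
      linear_combination ((t₂:ℚ)*n) * hβ₂q
  · rintro ⟨hint, lam, ⟨x, y, rfl⟩, rfl⟩
    rw [iPlus_eval D₀ d t₁ t₂ a₁ a₂ b x y hneg hd ha₁c ha₂c] at hint
    obtain ⟨k₁, hk₁⟩ := hint 0 0
    obtain ⟨k₃, hk₃⟩ := hint 1 0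
    obtain ⟨k₄, hk₄⟩ := hint 1 1
    simp only [Matrix.cons_val', Matrix.cons_val_zero, Matrix.cons_val_one, Matrix.head_cons,
      Matrix.head_fin_const, Matrix.empty_val', Matrix.cons_val_fin_one, Matrix.of_apply]
      at hk₁ hk₃ hk₄
    have hq1 : -(t₁*(x+y*(b:ℚ)))/a₁ = (k₁:ℚ) := by exact_mod_cast hk₁
    have hq3 : -2*y = (k₃:ℚ) := by exact_mod_cast hk₃
    have hq4 : t₂*(y*(b:ℚ)-x)/a₂ = (k₄:ℚ) := by exact_mod_cast hk₄
    have h1 : (t₁:ℚ)*(x+y*(b:ℚ)) = (a₁:ℚ)*(-k₁) := by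
      field_simp at hq1; linear_combination -hq1
    have h2 : (t₂:ℚ)*(y*(b:ℚ)-x) = (a₂:ℚ)*k₄ := by
      field_simp at hq4; linear_combination hq4
    have h1w : (t₁:ℚ)*(x + y*(btil:ℚ)) = (a₁:ℚ)*((-k₁ - t₁*k₃*β₁ : ℤ):ℚ) := by
      push_cast
      linear_combination h1 + ((t₁:ℚ)*y) * hβ₁q + (-(t₁:ℚ)*(a₁:ℚ)*(β₁:ℚ)) * hq3
    have h2w : (t₂:ℚ)*(x + y*(btil:ℚ)) = (a₂:ℚ)*((-k₄ - t₂*k₃*β₂ : ℤ):ℚ) := by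
      push_cast
      linear_combination -h2 + ((t₂:ℚ)*y) * hβ₂q + (-(t₂:ℚ)*(a₂:ℚ)*(β₂:ℚ)) * hq3
    obtain ⟨j, hj⟩ := key_w t₁ t₂ a₁ a₂ ht₁ ht₂ hc1 hc2 _ _ _ h1w h2w
    refine ⟨(j:ℂ)*((a₁*a₂ : ℕ):ℂ) + ((-k₃ : ℤ):ℂ)*((-(btil:ℂ) + sd D₀)/2), ⟨j, -k₃, rfl⟩, ?_⟩
    have hjC : (x:ℂ) + (y:ℂ)*(btil:ℂ) = (a₁:ℂ)*(a₂:ℂ)*(j:ℂ) := by exact_mod_cast hj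
    have hk₃C : (-2:ℂ)*(y:ℂ) = (k₃:ℂ) := by exact_mod_cast hq3
    have harg : (j:ℂ)*((a₁*a₂ : ℕ):ℂ) + ((-k₃ : ℤ):ℂ)*((-(btil:ℂ) + sd D₀)/2)
        = ((x:ℚ):ℂ) + ((y:ℚ):ℂ)*sd D₀ := by
      push_cast
      linear_combination -hjC + ((-(btil:ℂ) + sd D₀)/2) * hk₃C
    rw [harg]

lemma L2 (D₀ : ℤ) (hneg : D₀ < 0) (d t₁ t₂ a₁ a₂ : ℕ)
    (hd : (d:ℂ) ≠ 0) (ht₁ : (t₁:ℚ) ≠ 0) (ht₂ : (t₂:ℚ) ≠ 0)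
    (ha₁ : (a₁:ℚ) ≠ 0) (ha₂ : (a₂:ℚ) ≠ 0)
    (b btil c β₁ β₂ : ℤ) (hc : b^2 - D₀ = 4*(a₁:ℤ)*(a₂:ℤ)*c)
    (hβ₁ : btil - b = 2*(a₁:ℤ)*β₁) (hβ₂ : btil + b = 2*(a₂:ℤ)*β₂)
    (hc1 : IsCoprime (t₁:ℤ) ((t₂:ℤ)*(a₁:ℤ))) (hc2 : IsCoprime ((a₂:ℤ)) ((t₂:ℤ)*(a₁:ℤ))) :
    iPlus D₀ d ((t₁ : ℂ) * ((b : ℂ) + sd D₀) / (2 * (a₁ : ℂ)))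
      ((t₂ : ℂ) * ((b : ℂ) + sd D₀) / (2 * (a₂ : ℂ))) ''
      latSet ((a₁ * a₂ : ℕ) : ℂ) (-(btil : ℂ) + sd D₀) =
    LdSet ∩ iPlus D₀ d ((t₁ : ℂ) * ((b : ℂ) + sd D₀) / (2 * (a₁ : ℂ)))
      ((t₂ : ℂ) * ((b : ℂ) + sd D₀) / (2 * (a₂ : ℂ))) '' Kset D₀ := by
  have ha₁c : (a₁:ℂ) ≠ 0 := by exact_mod_cast (by exact_mod_cast ha₁ : ((a₁:ℚ):ℂ) ≠ 0)
  have ha₂c : (a₂:ℂ) ≠ 0 := by exact_mod_cast (by exact_mod_cast ha₂ : ((a₂:ℚ):ℂ) ≠ 0)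
  have hcq : (b:ℚ)^2 - (D₀:ℚ) = 4*(a₁:ℚ)*(a₂:ℚ)*(c:ℚ) := by exact_mod_cast hc
  have hβ₁q : (btil:ℚ) - (b:ℚ) = 2*(a₁:ℚ)*(β₁:ℚ) := by exact_mod_cast hβ₁
  have hβ₂q : (btil:ℚ) + (b:ℚ) = 2*(a₂:ℚ)*(β₂:ℚ) := by exact_mod_cast hβ₂
  ext M
  constructor
  · rintro ⟨lam, ⟨m, n, rfl⟩, rfl⟩
    set x : ℚ := m*(a₁*a₂) - n*btil with hxdef
    set y : ℚ := (n:ℚ) with hydef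
    have hlam : (m:ℂ)*((a₁*a₂ : ℕ):ℂ) + (n:ℂ)*(-(btil:ℂ) + sd D₀)
        = ((x:ℚ):ℂ) + ((y:ℚ):ℂ)*sd D₀ := by rw [hxdef, hydef]; push_cast; ring
    rw [hlam, iPlus_eval D₀ d t₁ t₂ a₁ a₂ b x y hneg hd ha₁c ha₂c]
    refine ⟨⟨?_, ⟨-n, by show ((_ : ℚ):ℂ) = _; push_cast [hydef]; ring⟩⟩,
      ⟨((x:ℚ):ℂ) + ((y:ℚ):ℂ)*sd D₀, ⟨x, y, rfl⟩,
      (iPlus_eval D₀ d t₁ t₂ a₁ a₂ b x y hneg hd ha₁c ha₂c).symm ▸ rfl⟩⟩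
    intro i j
    fin_cases i <;> fin_cases j
    · refine ⟨-(t₁*(m*a₂ - 2*n*β₁)), ?_⟩
      show ((_ : ℚ):ℂ) = _
      norm_cast
      rw [hxdef, hydef]; field_simp
      push_cast
      linear_combination ((t₁:ℚ)*n) * hβ₁q
    · refine ⟨2*t₁*t₂*n*c, ?_⟩
      show ((_ : ℚ):ℂ) = _
      norm_cast
      rw [hydef]; field_simp
      push_cast
      linear_combination ((t₁:ℚ)*t₂*n) * hcq
    · exact ⟨-2*n, by show ((_ : ℚ):ℂ) = _; push_cast [hydef]; ring⟩
    · refine ⟨t₂*(2*n*β₂ - m*a₁), ?_⟩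
      show ((_ : ℚ):ℂ) = _
      norm_cast
      rw [hxdef, hydef]; field_simp
      push_cast
      linear_combination ((t₂:ℚ)*n) * hβ₂q
  · rintro ⟨⟨hint, ke, hke⟩, lam, ⟨x, y, rfl⟩, rfl⟩
    rw [iPlus_eval D₀ d t₁ t₂ a₁ a₂ b x y hneg hd ha₁c ha₂c] at hint hke
    obtain ⟨k₁, hk₁⟩ := hint 0 0
    obtain ⟨k₄, hk₄⟩ := hint 1 1
    simp only [Matrix.cons_val', Matrix.cons_val_zero, Matrix.cons_val_one, Matrix.head_cons,
      Matrix.head_fin_const, Matrix.empty_val', Matrix.cons_val_fin_one, Matrix.of_apply]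
      at hk₁ hk₄ hke
    have hq1 : -(t₁*(x+y*(b:ℚ)))/a₁ = (k₁:ℚ) := by exact_mod_cast hk₁
    have hq3 : -2*y = 2*(ke:ℚ) := by exact_mod_cast hke
    have hq4 : t₂*(y*(b:ℚ)-x)/a₂ = (k₄:ℚ) := by exact_mod_cast hk₄
    have h1 : (t₁:ℚ)*(x+y*(b:ℚ)) = (a₁:ℚ)*(-k₁) := by
      field_simp at hq1; linear_combination -hq1
    have h2 : (t₂:ℚ)*(y*(b:ℚ)-x) = (a₂:ℚ)*k₄ := by
      field_simp at hq4; linear_combination hq4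
    have h1w : (t₁:ℚ)*(x + y*(btil:ℚ)) = (a₁:ℚ)*((-k₁ - 2*t₁*ke*β₁ : ℤ):ℚ) := by
      push_cast
      linear_combination h1 + ((t₁:ℚ)*y) * hβ₁q + (-(t₁:ℚ)*(a₁:ℚ)*(β₁:ℚ)) * hq3
    have h2w : (t₂:ℚ)*(x + y*(btil:ℚ)) = (a₂:ℚ)*((-k₄ - 2*t₂*ke*β₂ : ℤ):ℚ) := by
      push_cast
      linear_combination -h2 + ((t₂:ℚ)*y) * hβ₂q + (-(t₂:ℚ)*(a₂:ℚ)*(β₂:ℚ)) * hq3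
    obtain ⟨j, hj⟩ := key_w t₁ t₂ a₁ a₂ ht₁ ht₂ hc1 hc2 _ _ _ h1w h2w
    refine ⟨(j:ℂ)*((a₁*a₂ : ℕ):ℂ) + ((-ke : ℤ):ℂ)*(-(btil:ℂ) + sd D₀), ⟨j, -ke, rfl⟩, ?_⟩
    have hjC : (x:ℂ) + (y:ℂ)*(btil:ℂ) = (a₁:ℂ)*(a₂:ℂ)*(j:ℂ) := by exact_mod_cast hj
    have hk₃C : (-2:ℂ)*(y:ℂ) = 2*(ke:ℂ) := by exact_mod_cast hq3
    have harg : (j:ℂ)*((a₁*a₂ : ℕ):ℂ) + ((-ke : ℤ):ℂ)*(-(btil:ℂ) + sd D₀)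
        = ((x:ℚ):ℂ) + ((y:ℚ):ℂ)*sd D₀ := by
      push_cast
      linear_combination -hjC + ((-(btil:ℂ) + sd D₀)/2) * hk₃C
    rw [harg]

lemma dualL (D₀ : ℤ) (hneg : D₀ < 0) (d t₁ t₂ a₁ a₂ : ℕ)
    (hdq : (d:ℚ) ≠ 0) (ht₁q : (t₁:ℚ) ≠ 0) (ht₂q : (t₂:ℚ) ≠ 0)
    (ha₁q : (a₁:ℚ) ≠ 0) (ha₂q : (a₂:ℚ) ≠ 0) (b' : ℤ) :
    {μ : ℂ | μ ∈ Kset D₀ ∧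
        ∀ ν ∈ latSet ((a₁ * a₂ : ℕ) : ℂ) (-(b' : ℂ) + sd D₀),
          ∃ k : ℤ, ((d : ℂ) * ((t₁ * t₂ : ℕ) : ℂ) / ((a₁ * a₂ : ℕ) : ℂ)) *
            (μ * (starRingEnd ℂ) ν + (starRingEnd ℂ) (μ * (starRingEnd ℂ) ν)) = (k : ℂ)} =
      {z : ℂ | ∃ w ∈ latSet ((a₁ * a₂ : ℕ) : ℂ) (-(b' : ℂ) + sd D₀),
        z = w / (2 * (d : ℂ) * ((t₁ * t₂ : ℕ) : ℂ) * sd D₀)} := by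
  have he := sd_sq D₀ hneg
  have hne := sd_ne D₀ hneg
  have hD₀q : (D₀:ℚ) ≠ 0 := by exact_mod_cast hneg.ne
  have hdc : (d:ℂ) ≠ 0 := by exact_mod_cast (by exact_mod_cast hdq : ((d:ℚ):ℂ) ≠ 0)
  have ht₁c : (t₁:ℂ) ≠ 0 := by exact_mod_cast (by exact_mod_cast ht₁q : ((t₁:ℚ):ℂ) ≠ 0)
  have ht₂c : (t₂:ℂ) ≠ 0 := by exact_mod_cast (by exact_mod_cast ht₂q : ((t₂:ℚ):ℂ) ≠ 0)
  have ha₁c : (a₁:ℂ) ≠ 0 := by exact_mod_cast (by exact_mod_cast ha₁q : ((a₁:ℚ):ℂ) ≠ 0)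
  have ha₂c : (a₂:ℂ) ≠ 0 := by exact_mod_cast (by exact_mod_cast ha₂q : ((a₂:ℚ):ℂ) ≠ 0)
  have hprod : 2 * (d:ℂ) * ((t₁*t₂ : ℕ):ℂ) * sd D₀ ≠ 0 := by
    push_cast
    exact mul_ne_zero (mul_ne_zero (mul_ne_zero two_ne_zero hdc) (mul_ne_zero ht₁c ht₂c)) hne
  ext μ
  simp only [Set.mem_setOf_eq, Kset, latSet]
  constructor
  · rintro ⟨⟨x, y, rfl⟩, hcond⟩
    obtain ⟨k₁, hk₁⟩ := hcond ((a₁*a₂ : ℕ):ℂ) ⟨1, 0, by push_cast; ring⟩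
    obtain ⟨k₂, hk₂⟩ := hcond (-(b':ℂ) + sd D₀) ⟨0, 1, by push_cast; ring⟩
    simp only [map_add, _root_.map_mul, map_neg, map_natCast, map_intCast, map_ratCast,
      sd_conj, Complex.conj_conj] at hk₁ hk₂
    refine ⟨((-k₂:ℤ):ℂ)*((a₁*a₂ : ℕ):ℂ) + ((k₁:ℤ):ℂ)*(-(b':ℂ) + sd D₀),
      ⟨-k₂, k₁, rfl⟩, ?_⟩
    rw [eq_div_iff hprod]
    field_simp at hk₁ hk₂
    apply mul_right_cancel₀ (show ((a₁:ℂ)*(a₂:ℂ)) ≠ 0 from mul_ne_zero ha₁c ha₂c)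
    push_cast at hk₁ hk₂ ⊢
    linear_combination (sd D₀ - (b':ℂ)) * ((a₁:ℂ)*(a₂:ℂ)) * hk₁ - ((a₁:ℂ)*(a₂:ℂ)) * hk₂
  · rintro ⟨w, ⟨m, n, rfl⟩, rfl⟩
    have hAc : ((a₁*a₂ : ℕ):ℂ) ≠ 0 := by push_cast; exact mul_ne_zero ha₁c ha₂c
    have hQ : (2*(d:ℚ)*((t₁:ℚ)*(t₂:ℚ))) ≠ 0 :=
      mul_ne_zero (mul_ne_zero two_ne_zero hdq) (mul_ne_zero ht₁q ht₂q)
    have hQD : (2*(d:ℚ)*((t₁:ℚ)*(t₂:ℚ))*(D₀:ℚ)) ≠ 0 := mul_ne_zero hQ hD₀q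
    set X : ℚ := n/(2*d*(t₁*t₂)) with hXdef
    set Y : ℚ := (m*(a₁*a₂) - n*b')/(2*d*(t₁*t₂)*D₀) with hYdef
    have hXq : X*(2*(d:ℚ)*((t₁:ℚ)*(t₂:ℚ))) = (n:ℚ) := by
      rw [hXdef, div_mul_eq_mul_div, div_eq_iff (by exact_mod_cast hQ)]
      try ring
    have hYq : Y*(2*(d:ℚ)*((t₁:ℚ)*(t₂:ℚ))*(D₀:ℚ)) = (m:ℚ)*((a₁:ℚ)*(a₂:ℚ)) - (n:ℚ)*(b':ℚ) := by
      rw [hYdef, div_mul_eq_mul_div, div_eq_iff (by exact_mod_cast hQD)]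
      try ring
    have hXC := congrArg (fun q : ℚ => (q:ℂ)) hXq
    have hYC := congrArg (fun q : ℚ => (q:ℂ)) hYq
    simp only [Rat.cast_mul, Rat.cast_ofNat, Rat.cast_natCast, Rat.cast_intCast,
      Rat.cast_sub] at hXC hYC
    have hμ : ((m:ℂ)*((a₁*a₂:ℕ):ℂ) + (n:ℂ)*(-(b':ℂ)+sd D₀)) /
        (2*(d:ℂ)*((t₁*t₂:ℕ):ℂ)*sd D₀) = ((X:ℚ):ℂ) + ((Y:ℚ):ℂ)*sd D₀ := by
      rw [div_eq_iff hprod]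
      push_cast
      linear_combination -(sd D₀) * hXC - (2*(d:ℂ)*(t₁:ℂ)*(t₂:ℂ)*((Y:ℚ):ℂ)) * he - hYC
    constructor
    · exact ⟨X, Y, hμ⟩
    · rintro ν ⟨m', n', rfl⟩
      rw [hμ]
      refine ⟨n*m' - m*n', ?_⟩
      simp only [map_add, _root_.map_mul, map_neg, map_natCast, map_intCast, map_ratCast,
        sd_conj, Complex.conj_conj]
      rw [div_mul_eq_mul_div, div_eq_iff hAc]
      push_cast
      linear_combination (((m':ℂ)*((a₁:ℂ)*(a₂:ℂ)) - (n':ℂ)*(b':ℂ))) * hXC - (n':ℂ) * hYC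
        - (2*(d:ℂ)*(t₁:ℂ)*(t₂:ℂ)*((Y:ℚ):ℂ)*(n':ℂ)) * he

/-- Equation (2.35) and the dual-lattice assertion of Proposition 2.9 of the paper. -/
theorem stmt_10 (D₀ : ℤ) (hneg : D₀ < 0) (h8 : D₀ % 8 = 1) (h3 : ¬(3 : ℤ) ∣ D₀)
    (t₁ t₂ a₁ a₂ : ℕ) (ht₁ : 0 < t₁) (ht₂ : 0 < t₂) (ha₁ : 0 < a₁) (ha₂ : 0 < a₂)
    (hcot : Nat.Coprime t₁ t₂) (hcoa : Nat.Coprime a₁ a₂)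
    (b : ℤ)
    (hg1 : Int.gcd (a₁ : ℤ) (6 * b * (D₀ * ((t₁ * t₂ : ℕ) : ℤ) ^ 2)) = 1)
    (hg2 : Int.gcd (a₂ : ℤ) (6 * b * (D₀ * ((t₁ * t₂ : ℕ) : ℤ) ^ 2)) = 1)
    (hb1 : (4 * (a₁ : ℤ)) ∣ b ^ 2 - D₀) (hb2 : (4 * (a₂ : ℤ)) ∣ b ^ 2 - D₀)
    (h48a : 48 ∣ Int.gcd ((a₁ : ℤ) - (t₁ : ℤ)) (b - 1))
    (h48b : 48 ∣ Int.gcd ((a₂ : ℤ) - (t₂ : ℤ)) (b - 1))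
    (btil : ℤ)
    (hbt1 : (2 * (a₁ : ℤ)) ∣ btil - b) (hbt2 : (2 * (a₂ : ℤ)) ∣ btil + b)
    (hbt3 : (4 * (D₀ * ((t₁ * t₂ : ℕ) : ℤ) ^ 2)) ∣ btil - b)
    (z₁ z₂ : ℂ)
    (hz₁ : z₁ = (t₁ : ℂ) * ((b : ℂ) + sd D₀) / (2 * (a₁ : ℂ)))
    (hz₂ : z₂ = (t₂ : ℂ) * ((b : ℂ) + sd D₀) / (2 * (a₂ : ℂ)))
    (d : ℕ) (hd : 0 < d) :
    -- the four lattice identifications of (2.35)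
    (iPlus D₀ d z₁ z₂ ''
        latSet ((a₁ * a₂ : ℕ) : ℂ) ((-(btil : ℂ) + sd D₀) / 2) =
      intMatSet ∩ iPlus D₀ d z₁ z₂ '' Kset D₀) ∧
    (iPlus D₀ d z₁ z₂ ''
        latSet ((a₁ * a₂ : ℕ) : ℂ) (-(btil : ℂ) + sd D₀) =
      LdSet ∩ iPlus D₀ d z₁ z₂ '' Kset D₀) ∧
    (iMinus D₀ d z₁ z₂ ''
        latSet ((a₁ * a₂ : ℕ) : ℂ) ((-(b : ℂ) + sd D₀) / 2) =
      intMatSet ∩ iMinus D₀ d z₁ z₂ '' Kset D₀) ∧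
    (iMinus D₀ d z₁ z₂ ''
        latSet ((a₁ * a₂ : ℕ) : ℂ) (-(b : ℂ) + sd D₀) =
      LdSet ∩ iMinus D₀ d z₁ z₂ '' Kset D₀) ∧
    -- the dual lattice of ã is (1/(2dt√D₀))·ã ...
    ({μ : ℂ | μ ∈ Kset D₀ ∧
        ∀ ν ∈ latSet ((a₁ * a₂ : ℕ) : ℂ) (-(btil : ℂ) + sd D₀),
          ∃ k : ℤ, ((d : ℂ) * ((t₁ * t₂ : ℕ) : ℂ) / ((a₁ * a₂ : ℕ) : ℂ)) *
            (μ * conj ν + conj (μ * conj ν)) = (k : ℂ)} =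
      {z : ℂ | ∃ w ∈ latSet ((a₁ * a₂ : ℕ) : ℂ) (-(btil : ℂ) + sd D₀),
        z = w / (2 * (d : ℂ) * ((t₁ * t₂ : ℕ) : ℂ) * sd D₀)}) ∧
    -- ... and that of 𝔞 is (1/(2dt√D₀))·𝔞
    ({μ : ℂ | μ ∈ Kset D₀ ∧
        ∀ ν ∈ latSet ((a₁ * a₂ : ℕ) : ℂ) (-(b : ℂ) + sd D₀),
          ∃ k : ℤ, ((d : ℂ) * ((t₁ * t₂ : ℕ) : ℂ) / ((a₁ * a₂ : ℕ) : ℂ)) *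
            (μ * conj ν + conj (μ * conj ν)) = (k : ℂ)} =
      {z : ℂ | ∃ w ∈ latSet ((a₁ * a₂ : ℕ) : ℂ) (-(b : ℂ) + sd D₀),
        z = w / (2 * (d : ℂ) * ((t₁ * t₂ : ℕ) : ℂ) * sd D₀)}) := by
  have hdC : (d:ℂ) ≠ 0 := Nat.cast_ne_zero.mpr hd.ne'
  have hdq : (d:ℚ) ≠ 0 := Nat.cast_ne_zero.mpr hd.ne'
  have ht₁q : (t₁:ℚ) ≠ 0 := Nat.cast_ne_zero.mpr ht₁.ne'
  have ht₂q : (t₂:ℚ) ≠ 0 := Nat.cast_ne_zero.mpr ht₂.ne'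
  have ha₁q : (a₁:ℚ) ≠ 0 := Nat.cast_ne_zero.mpr ha₁.ne'
  have ha₂q : (a₂:ℚ) ≠ 0 := Nat.cast_ne_zero.mpr ha₂.ne'
  have hco1 : IsCoprime (a₁:ℤ) (6 * b * (D₀ * ((t₁ * t₂ : ℕ) : ℤ) ^ 2)) :=
    Int.isCoprime_iff_gcd_eq_one.mpr hg1
  have hco2 : IsCoprime (a₂:ℤ) (6 * b * (D₀ * ((t₁ * t₂ : ℕ) : ℤ) ^ 2)) :=
    Int.isCoprime_iff_gcd_eq_one.mpr hg2
  have hTcast : ((t₁ * t₂ : ℕ) : ℤ) = (t₁:ℤ)*(t₂:ℤ) := by push_cast; ring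
  have ha₁T : IsCoprime (a₁:ℤ) ((t₁:ℤ)*(t₂:ℤ)) := by
    have h := (hco1.of_mul_right_right).of_mul_right_right
    rw [hTcast] at h
    exact (IsCoprime.pow_right_iff (by norm_num)).mp h
  have ha₂T : IsCoprime (a₂:ℤ) ((t₁:ℤ)*(t₂:ℤ)) := by
    have h := (hco2.of_mul_right_right).of_mul_right_right
    rw [hTcast] at h
    exact (IsCoprime.pow_right_iff (by norm_num)).mp h
  have ha₁t₁ : IsCoprime (a₁:ℤ) (t₁:ℤ) := ha₁T.of_mul_right_left
  have ha₂t₂ : IsCoprime (a₂:ℤ) (t₂:ℤ) := ha₂T.of_mul_right_right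
  have ha₂2 : IsCoprime (a₂:ℤ) 2 := by
    have h6 : IsCoprime (a₂:ℤ) 6 := (hco2.of_mul_right_left).of_mul_right_left
    rw [show (6:ℤ) = 2*3 by norm_num] at h6
    exact h6.of_mul_right_left
  have ctt : IsCoprime (t₁:ℤ) (t₂:ℤ) := by
    rw [Int.isCoprime_iff_gcd_eq_one]; simpa using hcot
  have caa : IsCoprime (a₁:ℤ) (a₂:ℤ) := by
    rw [Int.isCoprime_iff_gcd_eq_one]; simpa using hcoa
  have hc1 : IsCoprime (t₁:ℤ) ((t₂:ℤ)*(a₁:ℤ)) := ctt.mul_right ha₁t₁.symm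
  have hc2 : IsCoprime (a₂:ℤ) ((t₂:ℤ)*(a₁:ℤ)) := ha₂t₂.mul_right caa.symm
  obtain ⟨c₁, hc₁⟩ := hb1
  have ha₂4a₁ : IsCoprime (a₂:ℤ) (4*(a₁:ℤ)) := by
    rw [show (4:ℤ)*(a₁:ℤ) = 2*2*(a₁:ℤ) by ring]
    exact (ha₂2.mul_right ha₂2).mul_right caa.symm
  have hdc₁ : (a₂:ℤ) ∣ (4*(a₁:ℤ))*c₁ := by
    rw [← hc₁]
    exact dvd_trans (Dvd.intro_left 4 rfl) hb2
  obtain ⟨c, rfl⟩ := ha₂4a₁.dvd_of_dvd_mul_left hdc₁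
  have hc : b^2 - D₀ = 4*(a₁:ℤ)*(a₂:ℤ)*c := by rw [hc₁]; ring
  obtain ⟨β₁, hβ₁⟩ := hbt1
  obtain ⟨β₂, hβ₂⟩ := hbt2
  have hβ₁' : btil - b = 2*(a₁:ℤ)*β₁ := by rw [hβ₁]
  have hβ₂' : btil + b = 2*(a₂:ℤ)*β₂ := by rw [hβ₂]
  subst hz₁ hz₂
  exact ⟨L1 D₀ hneg d t₁ t₂ a₁ a₂ hdC ht₁q ht₂q ha₁q ha₂q b btil c β₁ β₂ hc hβ₁' hβ₂' hc1 hc2,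
    L2 D₀ hneg d t₁ t₂ a₁ a₂ hdC ht₁q ht₂q ha₁q ha₂q b btil c β₁ β₂ hc hβ₁' hβ₂' hc1 hc2,
    L3 D₀ hneg d t₁ t₂ a₁ a₂ hdC ht₁q ht₂q ha₁q ha₂q b c hc hc1 hc2,
    L4 D₀ hneg d t₁ t₂ a₁ a₂ hdC ht₁q ht₂q ha₁q ha₂q b c hc hc1 hc2,
    dualL D₀ hneg d t₁ t₂ a₁ a₂ hdq ht₁q ht₂q ha₁q ha₂q btil,
    dualL D₀ hneg d t₁ t₂ a₁ a₂ hdq ht₁q ht₂q ha₁q ha₂q b⟩
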